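/- arXiv:2103.12833 — 2 statements merged into one kernel-verified Lean document; each statement's English description precedes it below -/
import Mathlib

section
/- Let S be a finite nonempty set, let r̂ₜ : S → ℝ for t = 1,…,T with η·|r̂ₜ(u)| ≤ 1 for all u and t, let μ and pₜ be probability distributions on S, and suppose pₜ(u) = (1−γ)·qₜ(u) + γ·μ(u) where qₜ(u) ∝ exp(η ∑_{s<t} r̂ₛ(u)). Then for every u* ∈ S: ∑ₜ r̂ₜ(u*) − (ln|S|)/η ≤ (1/(1−γ))·∑ₜ ∑ᵤ pₜ(u)r̂ₜ(u) + (η/(1−γ))·∑ₜ ∑ᵤ pₜ(u)r̂ₜ(u)² − (γ/(1−γ))·∑ₜ ∑ᵤ μ(u)r̂ₜ(u). -/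
/-!
The Hedge potential `Φₜ = log ∑ᵤ exp (η ∑_{s<t} r̂ₛ(u))` starts at `log |S|` and dominates
`η ∑_{s<t} r̂ₛ(u*)`. Since `exp x ≤ 1 + x + x²` for `x ≤ 1` and `log y ≤ y - 1`, each round raises it
by at most `∑ᵤ qₜ(u) (η r̂ₜ(u) + η² r̂ₜ(u)²)`. Telescoping gives the regret bound for `qₜ`; substituting
`(1 - γ) qₜ = pₜ - γ μ` and dropping the nonpositive term `-γ η ∑ᵤ μ(u) r̂ₜ(u)²` gives the bound for `pₜ`.
-/

open Finset Real

lemma Real.exp_le_one_add_add_sq {x : ℝ} (hx : x ≤ 1) : exp x ≤ 1 + x + x ^ 2 := by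
  rcases le_or_gt (-1) x with hx' | hx'
  · have := (abs_le.1 (abs_exp_sub_one_sub_id_le (abs_le.2 ⟨hx', hx⟩))).2
    linarith
  · nlinarith [exp_lt_one_iff.2 (hx'.trans neg_one_lt_zero)]

section Hedge

variable {S : Type*} [Fintype S]

lemma Real.log_sum_mul_exp_le [Nonempty S] {w x : S → ℝ} (hw : ∀ u, 0 < w u)
    (hx : ∀ u, x u ≤ 1) :
    log (∑ u, w u * exp (x u)) ≤
      log (∑ u, w u) + ∑ u, w u / (∑ u', w u') * (x u + x u ^ 2) := by
  set W := ∑ u, w u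
  have hW : 0 < W := sum_pos (fun u _ ↦ hw u) univ_nonempty
  have hsum : 0 < ∑ u, w u * exp (x u) :=
    sum_pos (fun u _ ↦ mul_pos (hw u) (exp_pos _)) univ_nonempty
  have hquad : (∑ u, w u * exp (x u)) / W ≤ 1 + ∑ u, w u / W * (x u + x u ^ 2) := by
    rw [div_le_iff₀ hW]
    calc ∑ u, w u * exp (x u) ≤ ∑ u, w u * (1 + x u + x u ^ 2) :=
          sum_le_sum fun u _ ↦ mul_le_mul_of_nonneg_left (exp_le_one_add_add_sq (hx u)) (hw u).le
      _ = (1 + ∑ u, w u / W * (x u + x u ^ 2)) * W := by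
          rw [add_mul, one_mul, sum_mul, ← sum_add_distrib]
          exact sum_congr rfl fun u _ ↦ by field_simp; ring
  have := log_le_sub_one_of_pos (div_pos hsum hW)
  rw [log_div hsum.ne' hW.ne'] at this
  linarith

noncomputable def hedgeDistribution (η : ℝ) (r : ℕ → S → ℝ) (t : ℕ) (u : S) : ℝ :=
  exp (η * ∑ s ∈ range t, r s u) / ∑ u', exp (η * ∑ s ∈ range t, r s u')

noncomputable def hedgePotential (η : ℝ) (r : ℕ → S → ℝ) (t : ℕ) : ℝ :=
  log (∑ u, exp (η * ∑ s ∈ range t, r s u))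

variable {η : ℝ} {r : ℕ → S → ℝ}

lemma hedgePotential_zero : hedgePotential η r 0 = log (Fintype.card S) := by
  simp [hedgePotential]

lemma mul_sum_le_hedgePotential (t : ℕ) (u₀ : S) :
    η * ∑ s ∈ range t, r s u₀ ≤ hedgePotential η r t := by
  rw [hedgePotential, ← log_exp (η * _)]
  exact log_le_log (exp_pos _)
    (single_le_sum (f := fun u ↦ exp (η * ∑ s ∈ range t, r s u))
      (fun u _ ↦ (exp_pos _).le) (mem_univ u₀))

lemma hedgePotential_succ_le [Nonempty S] {t : ℕ} (hr : ∀ u, η * r t u ≤ 1) :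
    hedgePotential η r (t + 1) ≤
      hedgePotential η r t + ∑ u, hedgeDistribution η r t u * (η * r t u + (η * r t u) ^ 2) := by
  have := log_sum_mul_exp_le (w := fun u ↦ exp (η * ∑ s ∈ range t, r s u)) (fun u ↦ exp_pos _) hr
  simpa only [hedgePotential, hedgeDistribution, sum_range_succ, mul_add, exp_add] using this

theorem hedge_regret_le (hη : 0 < η) {T : ℕ} (hr : ∀ t ∈ range T, ∀ u, η * r t u ≤ 1) (u₀ : S) :
    ∑ t ∈ range T, r t u₀ - log (Fintype.card S) / η ≤
      ∑ t ∈ range T, ∑ u, hedgeDistribution η r t u * (r t u + η * r t u ^ 2) := by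
  have : Nonempty S := ⟨u₀⟩
  have key : η * ∑ t ∈ range T, r t u₀ - log (Fintype.card S) ≤
      η * ∑ t ∈ range T, ∑ u, hedgeDistribution η r t u * (r t u + η * r t u ^ 2) :=
    calc η * ∑ t ∈ range T, r t u₀ - log (Fintype.card S)
        ≤ hedgePotential η r T - hedgePotential η r 0 := by
          rw [hedgePotential_zero]; linarith [mul_sum_le_hedgePotential (η := η) (r := r) T u₀]
      _ = ∑ t ∈ range T, (hedgePotential η r (t + 1) - hedgePotential η r t) :=
          (sum_range_sub _ _).symm
      _ ≤ ∑ t ∈ range T, ∑ u, hedgeDistribution η r t u * (η * r t u + (η * r t u) ^ 2) :=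
          sum_le_sum fun t ht ↦ by linarith [hedgePotential_succ_le (hr t ht)]
      _ = _ := by
          simp only [mul_sum]; exact sum_congr rfl fun t _ ↦ sum_congr rfl fun u _ ↦ by ring
  calc ∑ t ∈ range T, r t u₀ - log (Fintype.card S) / η
      = (η * ∑ t ∈ range T, r t u₀ - log (Fintype.card S)) / η := by field_simp
    _ ≤ _ := (div_le_iff₀' hη).2 key

end Hedge

lemma one_sub_mul_sum_le_of_mix {S : Type*} [Fintype S] {γ η : ℝ} {p q μ r : S → ℝ}
    (hγ : 0 ≤ γ) (hη : 0 ≤ η) (hμ : ∀ u, 0 ≤ μ u)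
    (hp : ∀ u, p u = (1 - γ) * q u + γ * μ u) :
    (1 - γ) * ∑ u, q u * (r u + η * r u ^ 2) ≤
      ∑ u, p u * r u + η * ∑ u, p u * r u ^ 2 - γ * ∑ u, μ u * r u := by
  simp only [mul_sum, ← sum_add_distrib, ← sum_sub_distrib]
  refine sum_le_sum fun u _ ↦ ?_
  rw [hp u]
  nlinarith [mul_nonneg (mul_nonneg hγ hη) (mul_nonneg (hμ u) (sq_nonneg (r u)))]

theorem exp_weights_potential_inequality_general {S : Type*} [Fintype S]
    (T : ℕ) (rhat : ℕ → S → ℝ) (η γ : ℝ) (hη : 0 < η) (hγ0 : 0 ≤ γ) (hγ1 : γ < 1)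
    (hbound : ∀ t ∈ Finset.range T, ∀ u : S, η * |rhat t u| ≤ 1)
    (μ : S → ℝ) (hμ0 : ∀ u, 0 ≤ μ u)
    (p q : ℕ → S → ℝ)
    (hq : ∀ t u, q t u =
      Real.exp (η * ∑ s ∈ Finset.range t, rhat s u) /
        ∑ u', Real.exp (η * ∑ s ∈ Finset.range t, rhat s u'))
    (hp : ∀ t u, p t u = (1 - γ) * q t u + γ * μ u) :
    ∀ us : S,
      ∑ t ∈ Finset.range T, rhat t us - Real.log (Fintype.card S) / η ≤
        (1 / (1 - γ)) * ∑ t ∈ Finset.range T, ∑ u, p t u * rhat t u +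
          (η / (1 - γ)) * ∑ t ∈ Finset.range T, ∑ u, p t u * (rhat t u) ^ 2 -
          (γ / (1 - γ)) * ∑ t ∈ Finset.range T, ∑ u, μ u * rhat t u := by
  intro us
  obtain rfl : q = hedgeDistribution η rhat := funext fun t ↦ funext (hq t)
  have hregret := hedge_regret_le hη
    (fun t ht u ↦ (mul_le_mul_of_nonneg_left (le_abs_self _) hη.le).trans (hbound t ht u)) us
  have hmix := sum_le_sum fun t (_ : t ∈ range T) ↦
    one_sub_mul_sum_le_of_mix (r := rhat t) hγ0 hη.le hμ0 (hp t)
  rw [← mul_sum, sum_sub_distrib, sum_add_distrib, ← mul_sum, ← mul_sum] at hmix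
  have h1γ : 0 < 1 - γ := sub_pos.2 hγ1
  calc _ ≤ _ := hregret
    _ ≤ (∑ t ∈ range T, ∑ u, p t u * rhat t u + η * ∑ t ∈ range T, ∑ u, p t u * rhat t u ^ 2
          - γ * ∑ t ∈ range T, ∑ u, μ u * rhat t u) / (1 - γ) := by
        rw [le_div_iff₀ h1γ, mul_comm]; exact hmix
    _ = _ := by ring

/-- The exponential-weights (Hedge) potential inequality underlying the Edge algorithm.
Let `S` be a finite nonempty set, `r̂ₜ : S → ℝ` estimated rewards with `η|r̂ₜ(u)| ≤ 1`,
`μ` a probability distribution on `S`, and `pₜ = (1−γ)qₜ + γμ` where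
`qₜ(u) ∝ exp(η ∑_{s<t} r̂ₛ(u))`.  Then for every `u* ∈ S`:
`∑ₜ r̂ₜ(u*) − (ln|S|)/η ≤ (1/(1−γ))∑ₜ∑ᵤ pₜ(u)r̂ₜ(u) + (η/(1−γ))∑ₜ∑ᵤ pₜ(u)r̂ₜ(u)²
  − (γ/(1−γ))∑ₜ∑ᵤ μ(u)r̂ₜ(u)`. -/
theorem exp_weights_potential_inequality {S : Type*} [Fintype S] [Nonempty S]
    (T : ℕ) (rhat : ℕ → S → ℝ) (η γ : ℝ) (hη : 0 < η) (hγ0 : 0 ≤ γ) (hγ1 : γ < 1)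
    (hbound : ∀ t ∈ Finset.range T, ∀ u : S, η * |rhat t u| ≤ 1)
    (μ : S → ℝ) (hμ0 : ∀ u, 0 ≤ μ u) (hμ1 : ∑ u, μ u = 1)
    (p q : ℕ → S → ℝ)
    (hq : ∀ t u, q t u =
      Real.exp (η * ∑ s ∈ Finset.range t, rhat s u) /
        ∑ u', Real.exp (η * ∑ s ∈ Finset.range t, rhat s u'))
    (hp : ∀ t u, p t u = (1 - γ) * q t u + γ * μ u) :
    ∀ us : S,
      ∑ t ∈ Finset.range T, rhat t us - Real.log (Fintype.card S) / η ≤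
        (1 / (1 - γ)) * ∑ t ∈ Finset.range T, ∑ u, p t u * rhat t u +
          (η / (1 - γ)) * ∑ t ∈ Finset.range T, ∑ u, p t u * (rhat t u) ^ 2 -
          (γ / (1 - γ)) * ∑ t ∈ Finset.range T, ∑ u, μ u * rhat t u :=
  exp_weights_potential_inequality_general T rhat η γ hη hγ0 hγ1 hbound μ hμ0 p q hq hp
end

section
/- For any n ≥ 2 and m ≥ 1, every source-to-destination path in the revised layered graph G_{m,n+1} contains exactly n+1 edges, of which exactly one is an auxiliary edge, and the map from allocation vectors u ∈ ℤ₊ⁿ with ∑ᵢ uᵢ ≤ m to such paths (sending u to the path through (0,0), (1,u₁), (2,u₁+u₂), …, (n, ∑ᵢuᵢ), d) is a bijection; in particular the number of source-to-destination paths in G_{m,n+1} equals C(m+n, n). -/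
/-- The edge relation of the revised layered graph `G_{m,n+1}`: vertices are pairs
`(layer, position)`, with source `s = (0,0)`, nodes `(i,0),…,(i,m)` in layers
`1 ≤ i ≤ n`, and dummy destination `d = (n+1,0)`.  There is an edge `s → (1,j)` for
every `j ≤ m`, an edge `(i-1,j) → (i,j')` iff `j ≤ j' ≤ m` for `2 ≤ i ≤ n`, and an
auxiliary edge `(n,j) → d` for every `j ≤ m`. -/
def revisedAdj (m n : ℕ) (a b : ℕ × ℕ) : Prop :=
  (a = (0, 0) ∧ b.1 = 1 ∧ b.2 ≤ m) ∨
  (2 ≤ b.1 ∧ b.1 ≤ n ∧ a.1 + 1 = b.1 ∧ a.2 ≤ b.2 ∧ b.2 ≤ m) ∨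
  (a.1 = n ∧ a.2 ≤ m ∧ b = (n + 1, 0))

/-- The vertex sequence of the path encoding allocation `u`:
`(0,0), (1,u₁), (2,u₁+u₂), …, (n, ∑ᵢuᵢ), d`. -/
def allocToPath (m n : ℕ) (u : Fin n → ℕ) : Fin (n + 2) → ℕ × ℕ :=
  fun k =>
    if (k : ℕ) = 0 then (0, 0)
    else if (k : ℕ) ≤ n then
      ((k : ℕ), ∑ j ∈ Finset.univ.filter (fun j : Fin n => (j : ℕ) < (k : ℕ)), u j)
    else (n + 1, 0)

lemma adj_layer {m n : ℕ} {a b : ℕ × ℕ} (h : revisedAdj m n a b) : b.1 = a.1 + 1 := by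
  rcases h with ⟨ha, hb, -⟩ | ⟨-, -, h, -⟩ | ⟨ha, -, hb⟩
  · rw [ha] at *; omega
  · omega
  · rw [hb]; simp; omega

lemma path_layer {m n k : ℕ} {v : Fin (k + 1) → ℕ × ℕ} (h0 : v 0 = (0, 0))
    (hadj : ∀ i : Fin k, revisedAdj m n (v i.castSucc) (v i.succ)) :
    ∀ j : Fin (k + 1), (v j).1 = j := by
  intro j
  induction j using Fin.induction with
  | zero => simp [h0]
  | succ i ih => rw [adj_layer (hadj i), ih]; simp

/-- partial sums -/
def pS {n : ℕ} (u : Fin n → ℕ) (k : ℕ) : ℕ :=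
  ∑ j ∈ Finset.univ.filter (fun j : Fin n => (j : ℕ) < k), u j

lemma pS_zero {n : ℕ} (u : Fin n → ℕ) : pS u 0 = 0 := by simp [pS]

lemma pS_succ {n : ℕ} (u : Fin n → ℕ) {k : ℕ} (hk : k < n) :
    pS u (k + 1) = pS u k + u ⟨k, hk⟩ := by
  unfold pS
  have : Finset.univ.filter (fun j : Fin n => (j : ℕ) < k + 1)
      = insert ⟨k, hk⟩ (Finset.univ.filter (fun j : Fin n => (j : ℕ) < k)) := by
    ext j; simp [Fin.ext_iff]; omega
  rw [this, Finset.sum_insert (by simp)]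
  omega

lemma pS_top {n : ℕ} (u : Fin n → ℕ) : pS u n = ∑ i, u i := by
  unfold pS
  congr 1
  apply Finset.filter_true_of_mem
  intro j _; exact j.isLt

lemma pS_mono {n : ℕ} (u : Fin n → ℕ) {k k' : ℕ} (h : k ≤ k') : pS u k ≤ pS u k' := by
  apply Finset.sum_le_sum_of_subset
  intro j hj
  simp only [Finset.mem_filter, Finset.mem_univ, true_and] at hj ⊢
  omega

lemma pS_le_sum {n : ℕ} (u : Fin n → ℕ) (k : ℕ) : pS u k ≤ ∑ i, u i := by
  rcases le_or_gt k n with h | h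
  · rw [← pS_top u]; exact pS_mono u h
  · have : pS u k = ∑ i, u i := by
      unfold pS
      congr 1
      apply Finset.filter_true_of_mem
      intro j _; have := j.isLt; omega
    exact this.le

lemma allocToPath_mid {m n : ℕ} (u : Fin n → ℕ) (k : Fin (n + 2)) (h1 : 1 ≤ (k : ℕ))
    (h2 : (k : ℕ) ≤ n) : allocToPath m n u k = ((k : ℕ), pS u k) := by
  unfold allocToPath pS
  rw [if_neg (by omega), if_pos h2]

lemma alloc_at_zero {m n : ℕ} (u : Fin n → ℕ) (k : Fin (n + 2)) (h : (k : ℕ) = 0) :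
    allocToPath m n u k = (0, 0) := by
  unfold allocToPath; rw [if_pos h]

lemma alloc_at_top {m n : ℕ} (u : Fin n → ℕ) (k : Fin (n + 2)) (h : (k : ℕ) = n + 1) :
    allocToPath m n u k = (n + 1, 0) := by
  unfold allocToPath; rw [if_neg (by omega), if_neg (by omega)]

lemma alloc_adj {m n : ℕ} (hn : 2 ≤ n) {u : Fin n → ℕ} (hu : ∑ i, u i ≤ m) (i : Fin (n + 1)) :
    revisedAdj m n (allocToPath m n u i.castSucc) (allocToPath m n u i.succ) := by
  have hc : (i.castSucc : ℕ) = (i : ℕ) := Fin.coe_castSucc i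
  have hs : (i.succ : ℕ) = (i : ℕ) + 1 := Fin.val_succ i
  have hlt : (i : ℕ) < n + 1 := i.isLt
  by_cases h0 : (i : ℕ) = 0
  · left
    rw [alloc_at_zero u i.castSucc (by omega), allocToPath_mid u i.succ (by omega) (by omega)]
    exact ⟨rfl, by omega, le_trans (pS_le_sum u _) hu⟩
  · by_cases hn' : (i : ℕ) = n
    · right; right
      rw [allocToPath_mid u i.castSucc (by omega) (by omega),
        alloc_at_top u i.succ (by omega)]
      exact ⟨by simpa using hn', le_trans (pS_le_sum u _) hu, rfl⟩
    · right; left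
      rw [allocToPath_mid u i.castSucc (by omega) (by omega),
        allocToPath_mid u i.succ (by omega) (by omega)]
      exact ⟨by simp <;> omega, by simp <;> omega, by simp <;> omega,
        pS_mono u (by omega), le_trans (pS_le_sum u _) hu⟩

lemma alloc_inj {m n : ℕ} (u u' : Fin n → ℕ)
    (h : allocToPath m n u = allocToPath m n u') : u = u' := by
  have key : ∀ k : ℕ, k ≤ n → pS u k = pS u' k := by
    intro k hk
    rcases Nat.eq_zero_or_pos k with rfl | hk0
    · rw [pS_zero, pS_zero]
    · have hcast : ((⟨k, by omega⟩ : Fin (n + 2)) : ℕ) = k := rfl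
      have := congrFun h ⟨k, by omega⟩
      rw [allocToPath_mid u _ (by omega) (by omega),
        allocToPath_mid u' _ (by omega) (by omega), Prod.mk.injEq] at this
      simpa using this.2
  funext j
  have h1 := key (j : ℕ) (le_of_lt j.isLt)
  have h2 := key ((j : ℕ) + 1) j.isLt
  have e1 := pS_succ u j.isLt
  have e2 := pS_succ u' j.isLt
  simp only [Fin.eta] at e1 e2
  omega

lemma alloc_surj {m n : ℕ} (v : Fin (n + 2) → ℕ × ℕ)
    (h0 : v 0 = (0, 0)) (hl : v (Fin.last (n + 1)) = (n + 1, 0))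
    (hadj : ∀ i : Fin (n + 1), revisedAdj m n (v i.castSucc) (v i.succ)) :
    ∃ u : Fin n → ℕ, ∑ i, u i ≤ m ∧ allocToPath m n u = v := by
  have hlay : ∀ j : Fin (n + 2), (v j).1 = (j : ℕ) := path_layer h0 hadj
  have hadj' : ∀ k : ℕ, (hk : k < n + 1) →
      revisedAdj m n (v ⟨k, by omega⟩) (v ⟨k + 1, by omega⟩) := fun k hk => hadj ⟨k, hk⟩
  have hlay' : ∀ k : ℕ, (hk : k < n + 2) → (v ⟨k, hk⟩).1 = k := fun k hk => hlay ⟨k, hk⟩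
  have hmono : ∀ k : ℕ, (hk : k < n) → (v ⟨k, by omega⟩).2 ≤ (v ⟨k + 1, by omega⟩).2 := by
    intro k hk
    rcases hadj' k (by omega) with ⟨ha, -, -⟩ | ⟨-, -, -, hab, -⟩ | ⟨-, -, hb⟩
    · rw [ha]; exact Nat.zero_le _
    · exact hab
    · exfalso
      have := hlay' (k + 1) (by omega)
      rw [hb] at this
      simp at this
      omega
  have hTn : (v ⟨n, by omega⟩).2 ≤ m := by
    rcases hadj' n (by omega) with ⟨ha, -, -⟩ | ⟨-, hb, -, -, -⟩ | ⟨-, h2, -⟩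
    · rw [ha]; exact Nat.zero_le _
    · exfalso
      have := hlay' (n + 1) (by omega)
      omega
    · exact h2
  refine ⟨fun j => (v ⟨(j : ℕ) + 1, by omega⟩).2 - (v ⟨(j : ℕ), by omega⟩).2, ?_, ?_⟩
  all_goals
    have key : ∀ k : ℕ, (hk : k ≤ n) →
        pS (fun j : Fin n => (v ⟨(j : ℕ) + 1, by omega⟩).2 - (v ⟨(j : ℕ), by omega⟩).2) k
          = (v ⟨k, by omega⟩).2 := by
      intro k
      induction k with
      | zero => intro _; rw [pS_zero, show (⟨0, by omega⟩ : Fin (n + 2)) = 0 from rfl, h0]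
      | succ k ih =>
        intro hk
        rw [pS_succ _ (by omega), ih (by omega)]
        exact Nat.add_sub_cancel' (hmono k (by omega))
  · rw [← pS_top]
    rw [key n le_rfl]
    exact hTn
  · funext k
    rcases Nat.lt_trichotomy (k : ℕ) 0 with h | h | h
    · omega
    · rw [alloc_at_zero _ k h, show k = 0 from Fin.ext h, h0]
    rcases Nat.lt_or_ge (k : ℕ) (n + 1) with h2 | h2
    · rw [allocToPath_mid _ k (by omega) (by omega)]
      refine Prod.ext ?_ ?_
      · exact (hlay k).symm
      · rw [key (k : ℕ) (by omega)]
    · have hk : k = Fin.last (n + 1) := Fin.ext (by have := k.isLt; simp [Fin.val_last]; omega)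
      rw [alloc_at_top _ k (by simp [hk, Fin.val_last]), hk, hl]

lemma card_finsetSum {β ι : Type*} (s : Finset ι) (f : ι → Multiset β) :
    Multiset.card (∑ i ∈ s, f i) = ∑ i ∈ s, Multiset.card (f i) := by
  classical
  induction s using Finset.cons_induction with
  | empty => simp
  | cons a s ha ih => simp [Finset.sum_cons, ih]

noncomputable def symEquivTuple (N m : ℕ) :
    Sym (Fin N) m ≃ {u : Fin N → ℕ // ∑ i, u i = m} where
  toFun s := ⟨fun i => s.1.count i,
    by rw [Multiset.sum_count_eq_card (fun a _ => Finset.mem_univ a)]; exact s.2⟩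
  invFun u := ⟨∑ i, Multiset.replicate (u.1 i) i,
    by rw [card_finsetSum]; simp [u.2]⟩
  left_inv s := Subtype.ext (Multiset.ext.2 fun a => by
    simp [Multiset.count_sum', Multiset.count_replicate])
  right_inv u := Subtype.ext (funext fun i => by
    simp [Multiset.count_sum', Multiset.count_replicate])

def slackEquiv (n m : ℕ) :
    {u : Fin n → ℕ // ∑ i, u i ≤ m} ≃ {w : Fin (n + 1) → ℕ // ∑ i, w i = m} where
  toFun u := ⟨Fin.cons (m - ∑ i, u.1 i) u.1, by rw [Fin.sum_cons]; omega⟩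
  invFun w := ⟨fun i => w.1 i.succ, by
    show ∑ i : Fin n, w.1 i.succ ≤ m
    have := w.2; rw [Fin.sum_univ_succ] at this; omega⟩
  left_inv u := Subtype.ext (funext fun i => by simp)
  right_inv w := Subtype.ext (funext fun i => by
    induction i using Fin.cases with
    | zero =>
      have := w.2; rw [Fin.sum_univ_succ] at this
      simp only [Fin.cons_zero]
      show m - ∑ i : Fin n, w.1 i.succ = w.1 0
      omega
    | succ j => simp)

lemma card_le_sum (n m : ℕ) :
    Nat.card {u : Fin n → ℕ // ∑ i, u i ≤ m} = (m + n).choose n := by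
  rw [Nat.card_congr ((slackEquiv n m).trans (symEquivTuple (n + 1) m).symm),
    Nat.card_eq_fintype_card, Sym.card_sym_eq_choose]
  simp only [Fintype.card_fin]
  have h1 : n + 1 + m - 1 = m + n := by omega
  rw [h1]
  have h2 : (m + n).choose n = (m + n).choose (m + n - m) := by
    congr 1; omega
  rw [h2, Nat.choose_symm (Nat.le_add_right m n)]

/-- For `n ≥ 2`, `m ≥ 1`: (i) every source-to-destination path in the revised layered
graph `G_{m,n+1}` has exactly `n+1` edges, exactly one of which is auxiliary;
(ii) the map `u ↦ (0,0),(1,u₁),(2,u₁+u₂),…,(n,∑uᵢ),d` is a bijection from allocations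
`u ∈ ℤ₊ⁿ` with `∑ᵢ uᵢ ≤ m` onto source-to-destination paths; (iii) in particular the
number of source-to-destination paths equals `C(m+n, n)`. -/
theorem revised_graph_paths (m n : ℕ) (hn : 2 ≤ n) (hm : 1 ≤ m) :
    (∀ (k : ℕ) (v : Fin (k + 1) → ℕ × ℕ),
      v 0 = (0, 0) → v (Fin.last k) = (n + 1, 0) →
      (∀ i : Fin k, revisedAdj m n (v i.castSucc) (v i.succ)) →
      k = n + 1 ∧
        (∃! i : Fin k, (v i.castSucc).1 = n ∧ (v i.castSucc).2 ≤ m ∧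
          v i.succ = (n + 1, 0))) ∧
    Set.BijOn (allocToPath m n)
      {u : Fin n → ℕ | ∑ i, u i ≤ m}
      {v : Fin (n + 2) → ℕ × ℕ |
        v 0 = (0, 0) ∧ v (Fin.last (n + 1)) = (n + 1, 0) ∧
        ∀ i : Fin (n + 1), revisedAdj m n (v i.castSucc) (v i.succ)} ∧
    Nat.card {v : Fin (n + 2) → ℕ × ℕ //
        v 0 = (0, 0) ∧ v (Fin.last (n + 1)) = (n + 1, 0) ∧
        ∀ i : Fin (n + 1), revisedAdj m n (v i.castSucc) (v i.succ)} =
      (m + n).choose n := by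
  have part2 : Set.BijOn (allocToPath m n)
      {u : Fin n → ℕ | ∑ i, u i ≤ m}
      {v : Fin (n + 2) → ℕ × ℕ |
        v 0 = (0, 0) ∧ v (Fin.last (n + 1)) = (n + 1, 0) ∧
        ∀ i : Fin (n + 1), revisedAdj m n (v i.castSucc) (v i.succ)} := by
    refine ⟨?_, ?_, ?_⟩
    · intro u hu
      exact ⟨alloc_at_zero u 0 rfl, alloc_at_top u _ (by simp [Fin.val_last]),
        fun i => alloc_adj hn hu i⟩
    · intro u _ u' _ h
      exact alloc_inj u u' h
    · intro v hv
      obtain ⟨u, hu, he⟩ := alloc_surj v hv.1 hv.2.1 hv.2.2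
      exact ⟨u, hu, he⟩
  refine ⟨?_, part2, ?_⟩
  · intro k v h0 hl hadj
    have hlay := path_layer h0 hadj
    have hk : k = n + 1 := by
      have := hlay (Fin.last k)
      rw [hl] at this
      simp [Fin.val_last] at this
      omega
    subst hk
    have hcs : (v (Fin.castSucc (⟨n, by omega⟩ : Fin (n + 1)))).1 = n := hlay _
    have hsc : (v (Fin.succ (⟨n, by omega⟩ : Fin (n + 1)))).1 = n + 1 := hlay _
    rcases hadj ⟨n, by omega⟩ with ⟨ha, hb, -⟩ | ⟨-, hb, -, -, -⟩ | ⟨-, h2, h3⟩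
    · rw [ha] at hcs; simp at hcs; omega
    · omega
    refine ⟨rfl, ⟨⟨n, by omega⟩, ⟨hcs, h2, h3⟩, ?_⟩⟩
    rintro j ⟨hj, -, -⟩
    have hj' := hlay j.castSucc
    apply Fin.ext
    show (j : ℕ) = n
    rw [hj'] at hj
    simpa using hj
  · exact (Nat.card_congr ((Set.BijOn.equiv _ part2).symm)).trans (card_le_sum n m)
end
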